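/- arXiv:2501.05428 — 6 statements merged into one kernel-verified Lean document; each statement's English description precedes it below -/
import Mathlib

section
/- Let H be a finite-dimensional complex inner product space and let q : H → H be an orthogonal projection (q ∘ q = q and q* = q). Then every tangent vector A at q (i.e. every linear A with qA + Aq = A) decomposes uniquely as A = B + iC where B and C are self-adjoint linear maps each satisfying the tangency condition qB + Bq = B and qC + Cq = C. In particular, the tangent space to the manifold of orthogonal projections at q is a totally real subspace of the tangent space of the manifold of all projections with respect to the complex structure A ↦ iA. -/
/-!
For a self-adjoint `q`, the tangency condition `q a + a q = a` is ℂ-linear in `a` and stable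
under the adjoint, so it cuts out a star-closed complex subspace. Such a subspace contains the
real and imaginary parts `(a + a*)/2` and `(a - a*)/(2i)` of each of its elements, and the
Cartesian decomposition `a = ℜ a + i ℑ a` into self-adjoint parts is unique.
-/

open Complex ComplexStarModule

section CartesianDecomposition

variable {A : Type*} [AddCommGroup A] [Module ℂ A] [StarAddMonoid A] [StarModule ℂ A]

lemma realPart_add_I_smul_of_isSelfAdjoint {b c : A} (hb : IsSelfAdjoint b)
    (hc : IsSelfAdjoint c) : (ℜ (b + I • c) : A) = b := by
  simp [hb.coe_realPart, hc.imaginaryPart]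

lemma imaginaryPart_add_I_smul_of_isSelfAdjoint {b c : A} (hb : IsSelfAdjoint b)
    (hc : IsSelfAdjoint c) : (ℑ (b + I • c) : A) = c := by
  simp [hb.imaginaryPart, hc.coe_realPart]

variable {S : Submodule ℂ A} {a : A}

lemma realPart_mem_of_star_mem (hS : ∀ x ∈ S, star x ∈ S) (ha : a ∈ S) : (ℜ a : A) ∈ S := by
  rw [realPart_apply_coe]
  exact S.smul_of_tower_mem _ (S.add_mem ha (hS a ha))

lemma imaginaryPart_mem_of_star_mem (hS : ∀ x ∈ S, star x ∈ S) (ha : a ∈ S) :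
    (ℑ a : A) ∈ S := by
  rw [imaginaryPart_apply_coe]
  exact S.smul_mem _ (S.smul_of_tower_mem _ (S.sub_mem ha (hS a ha)))

theorem existsUnique_selfAdjoint_add_I_smul_of_star_mem (hS : ∀ x ∈ S, star x ∈ S)
    (ha : a ∈ S) :
    ∃! bc : A × A, IsSelfAdjoint bc.1 ∧ IsSelfAdjoint bc.2 ∧ bc.1 ∈ S ∧ bc.2 ∈ S ∧
      a = bc.1 + I • bc.2 := by
  refine ⟨((ℜ a : A), (ℑ a : A)), ⟨(ℜ a).property, (ℑ a).property,
    realPart_mem_of_star_mem hS ha, imaginaryPart_mem_of_star_mem hS ha,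
    (realPart_add_I_smul_imaginaryPart a).symm⟩, ?_⟩
  rintro ⟨b, c⟩ ⟨hb, hc, -, -, rfl⟩
  exact Prod.ext (realPart_add_I_smul_of_isSelfAdjoint hb hc).symm
    (imaginaryPart_add_I_smul_of_isSelfAdjoint hb hc).symm

end CartesianDecomposition

section Tangent

variable {R : Type*} [NonUnitalRing R] [Module ℂ R] [IsScalarTower ℂ R R] [SMulCommClass ℂ R R]

/-- For an idempotent `q`, the tangent space at `q` to the manifold of idempotents. -/
def tangentSubmodule (q : R) : Submodule ℂ R :=
  LinearMap.ker (LinearMap.mulLeft ℂ q + LinearMap.mulRight ℂ q - LinearMap.id)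

lemma mem_tangentSubmodule {q a : R} : a ∈ tangentSubmodule q ↔ q * a + a * q = a := by
  simp [tangentSubmodule, sub_eq_zero]

lemma star_mem_tangentSubmodule [StarRing R] {q a : R} (hq : IsSelfAdjoint q)
    (ha : a ∈ tangentSubmodule q) : star a ∈ tangentSubmodule q := by
  rw [mem_tangentSubmodule] at ha ⊢
  conv_rhs => rw [← ha]
  rw [star_add, star_mul, star_mul, hq.star_eq, add_comm]

end Tangent

theorem tangent_totally_real_decomposition_general
    (H : Type*) [NormedAddCommGroup H] [InnerProductSpace ℂ H] [FiniteDimensional ℂ H]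
    (q A : H →ₗ[ℂ] H)
    (hqsa : LinearMap.adjoint q = q)
    (hA : q ∘ₗ A + A ∘ₗ q = A) :
    ∃! BC : (H →ₗ[ℂ] H) × (H →ₗ[ℂ] H),
      LinearMap.adjoint BC.1 = BC.1 ∧
      LinearMap.adjoint BC.2 = BC.2 ∧
      q ∘ₗ BC.1 + BC.1 ∘ₗ q = BC.1 ∧
      q ∘ₗ BC.2 + BC.2 ∘ₗ q = BC.2 ∧
      A = BC.1 + Complex.I • BC.2 := by
  have hq : IsSelfAdjoint q := LinearMap.isSelfAdjoint_iff'.mpr hqsa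
  have hA' : A ∈ tangentSubmodule q := mem_tangentSubmodule.mpr hA
  simpa only [← LinearMap.isSelfAdjoint_iff', ← Module.End.mul_eq_comp, ← mem_tangentSubmodule]
    using existsUnique_selfAdjoint_add_I_smul_of_star_mem
      (fun _ => star_mem_tangentSubmodule hq) hA'

/-- Let `H` be a finite-dimensional complex inner product space and
`q` an orthogonal projection (`q ∘ q = q`, `q* = q`).  Every tangent vector `A` at `q`
(`q∘A + A∘q = A`) decomposes uniquely as `A = B + i•C` with `B`, `C` self-adjoint
tangent vectors at `q`.  (The tangent space of the zero section is totally real.) -/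
theorem tangent_totally_real_decomposition
    (H : Type*) [NormedAddCommGroup H] [InnerProductSpace ℂ H] [FiniteDimensional ℂ H]
    (q A : H →ₗ[ℂ] H)
    (hq : q ∘ₗ q = q) (hqsa : LinearMap.adjoint q = q)
    (hA : q ∘ₗ A + A ∘ₗ q = A) :
    ∃! BC : (H →ₗ[ℂ] H) × (H →ₗ[ℂ] H),
      LinearMap.adjoint BC.1 = BC.1 ∧
      LinearMap.adjoint BC.2 = BC.2 ∧
      q ∘ₗ BC.1 + BC.1 ∘ₗ q = BC.1 ∧
      q ∘ₗ BC.2 + BC.2 ∘ₗ q = BC.2 ∧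
      A = BC.1 + Complex.I • BC.2 :=
  tangent_totally_real_decomposition_general H q A hqsa hA
end

section
/- Let H be a finite-dimensional complex inner product space, q : H → H a projection, and A, B tangent vectors at q (qA + Aq = A, qB + Bq = B). Set Ω_q(A,B) := i·Tr(q(AB − BA)). If [q,A] = A and [q,B] = B, then Ω_q(A,B) = 0; likewise, if [q,A] = −A and [q,B] = −B, then Ω_q(A,B) = 0. That is, both eigenspaces of the involution K_q = [q,·] on the tangent space at q are isotropic (Lagrangian) for Ω_q. -/
/-!
Adding and subtracting the tangency relation `qA + Aq = A` and the eigenvalue relation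
`qA - Aq = ±A` gives `qA = A` on the `+1` eigenspace and `qA = 0` on the `-1` eigenspace.
In the first case `q[A,B] = [A,B]`, whose trace vanishes; in the second `q[A,B] = 0`.
-/

section AnticommutatorCommutator

variable {R : Type*} [Ring R] {q a b : R}

theorem mul_eq_self_of_add_eq_self_of_sub_eq_self [IsAddTorsionFree R]
    (hsum : q * a + a * q = a) (hdiff : q * a - a * q = a) : q * a = a :=
  nsmul_right_injective two_ne_zero <| by
    calc 2 • (q * a) = (q * a + a * q) + (q * a - a * q) := by abel
      _ = 2 • a := by rw [hsum, hdiff, two_nsmul]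

theorem mul_eq_zero_of_add_eq_self_of_sub_eq_neg [IsAddTorsionFree R]
    (hsum : q * a + a * q = a) (hdiff : q * a - a * q = -a) : q * a = 0 :=
  two_nsmul_eq_zero.mp <| by
    calc 2 • (q * a) = (q * a + a * q) + (q * a - a * q) := by abel
      _ = 0 := by rw [hsum, hdiff, add_neg_cancel]

theorem mul_lie_eq_lie_of_mul_eq_self (ha : q * a = a) (hb : q * b = b) :
    q * ⁅a, b⁆ = ⁅a, b⁆ := by
  rw [Ring.lie_def, mul_sub, ← mul_assoc, ← mul_assoc, ha, hb]

theorem mul_lie_eq_zero_of_mul_eq_zero (ha : q * a = 0) (hb : q * b = 0) :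
    q * ⁅a, b⁆ = 0 := by
  rw [Ring.lie_def, mul_sub, ← mul_assoc, ← mul_assoc, ha, hb, zero_mul, zero_mul, sub_zero]

end AnticommutatorCommutator

theorem K_eigenspaces_isotropic_general
    (H : Type*) [NormedAddCommGroup H] [InnerProductSpace ℂ H]
    (q A B : H →ₗ[ℂ] H)
    (hA : q ∘ₗ A + A ∘ₗ q = A)
    (hB : q ∘ₗ B + B ∘ₗ q = B) :
    ((q ∘ₗ A - A ∘ₗ q = A ∧ q ∘ₗ B - B ∘ₗ q = B) →
      Complex.I * LinearMap.trace ℂ H (q ∘ₗ (A ∘ₗ B - B ∘ₗ A)) = 0) ∧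
    ((q ∘ₗ A - A ∘ₗ q = -A ∧ q ∘ₗ B - B ∘ₗ q = -B) →
      Complex.I * LinearMap.trace ℂ H (q ∘ₗ (A ∘ₗ B - B ∘ₗ A)) = 0) := by
  have : IsAddTorsionFree (Module.End ℂ H) := .of_isTorsionFree ℂ _
  simp only [← Module.End.mul_eq_comp, ← Ring.lie_def] at hA hB ⊢
  constructor
  · rintro ⟨hA', hB'⟩
    rw [mul_lie_eq_lie_of_mul_eq_self (mul_eq_self_of_add_eq_self_of_sub_eq_self hA hA')
      (mul_eq_self_of_add_eq_self_of_sub_eq_self hB hB'), LinearMap.trace_lie, mul_zero]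
  · rintro ⟨hA', hB'⟩
    rw [mul_lie_eq_zero_of_mul_eq_zero (mul_eq_zero_of_add_eq_self_of_sub_eq_neg hA hA')
      (mul_eq_zero_of_add_eq_self_of_sub_eq_neg hB hB'), map_zero, mul_zero]

/-- Both eigenspaces of the involution `K_q = [q,·]` on the tangent
space at a projection `q` are isotropic (Lagrangian) for
`Ω_q(A,B) = i·Tr(q(AB − BA))`. -/
theorem K_eigenspaces_isotropic
    (H : Type*) [NormedAddCommGroup H] [InnerProductSpace ℂ H] [FiniteDimensional ℂ H]
    (q A B : H →ₗ[ℂ] H)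
    (hq : q ∘ₗ q = q)
    (hA : q ∘ₗ A + A ∘ₗ q = A)
    (hB : q ∘ₗ B + B ∘ₗ q = B) :
    ((q ∘ₗ A - A ∘ₗ q = A ∧ q ∘ₗ B - B ∘ₗ q = B) →
      Complex.I * LinearMap.trace ℂ H (q ∘ₗ (A ∘ₗ B - B ∘ₗ A)) = 0) ∧
    ((q ∘ₗ A - A ∘ₗ q = -A ∧ q ∘ₗ B - B ∘ₗ q = -B) →
      Complex.I * LinearMap.trace ℂ H (q ∘ₗ (A ∘ₗ B - B ∘ₗ A)) = 0) :=
  K_eigenspaces_isotropic_general H q A B hA hB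
end

section
/- Let H be a finite-dimensional complex inner product space, q : H → H an orthogonal projection (q ∘ q = q, q* = q), and A, B self-adjoint tangent vectors at q (qA + Aq = A, qB + Bq = B, A* = A, B* = B). Set Ω_q(A,B) := i·Tr(q(AB − BA)). Then: (i) Ω_q(A,B) = Tr(A · i[B,q]); (ii) Ω_q(A,B) is a real number; and (iii) the symmetric form (A,B) ↦ Tr(AB) is positive definite on self-adjoint tangent vectors, i.e. Tr(A∘A) > 0 whenever A ≠ 0. (Hence the zero section of T*G_n(H), i.e. the Grassmannian of orthogonal projections, is Kähler for the real part of Ω and Lagrangian for its imaginary part.) -/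
/-!
(i) is cyclicity of the trace. For (ii), taking adjoints turns `q[A,B]` into `[B,A]q`, so
`Tr(q[A,B])` is purely imaginary because `Tr(T*) = conj Tr(T)`. For (iii), in an orthonormal
basis `Tr(A*A)` is the squared Frobenius norm of the matrix of `A`.
-/

open scoped ComplexConjugate ComplexOrder

namespace LinearMap

theorem trace_comp_commutator_cycle {R M : Type*} [CommRing R] [AddCommGroup M] [Module R M]
    (q A B : M →ₗ[R] M) :
    trace R M (q ∘ₗ (A ∘ₗ B - B ∘ₗ A)) = trace R M (A ∘ₗ (B ∘ₗ q - q ∘ₗ B)) := by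
  simp only [← Module.End.mul_eq_comp, mul_sub, map_sub]
  rw [trace_mul_comm R q, ← mul_assoc q B A, trace_mul_comm R (q * B) A, mul_assoc]

variable {𝕜 E : Type*} [RCLike 𝕜] [NormedAddCommGroup E] [InnerProductSpace 𝕜 E]
  [FiniteDimensional 𝕜 E]

theorem trace_adjoint (T : E →ₗ[𝕜] E) : trace 𝕜 E (adjoint T) = conj (trace 𝕜 E T) := by
  let b := (stdOrthonormalBasis 𝕜 E).toBasis
  rw [trace_eq_matrix_trace 𝕜 b, trace_eq_matrix_trace 𝕜 b, toMatrix_adjoint,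
    Matrix.trace_conjTranspose, RCLike.star_def]

theorem conj_trace_comp_commutator {q A B : E →ₗ[𝕜] E} (hq : adjoint q = q)
    (hA : adjoint A = A) (hB : adjoint B = B) :
    conj (trace 𝕜 E (q ∘ₗ (A ∘ₗ B - B ∘ₗ A))) = -trace 𝕜 E (q ∘ₗ (A ∘ₗ B - B ∘ₗ A)) := by
  rw [← trace_adjoint, adjoint_comp, map_sub, adjoint_comp, adjoint_comp, hq, hA, hB,
    trace_comp_comm', ← neg_sub, comp_neg, map_neg]

theorem trace_adjoint_comp_self_pos {T : E →ₗ[𝕜] E} (hT : T ≠ 0) :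
    0 < trace 𝕜 E (adjoint T ∘ₗ T) := by
  let b := stdOrthonormalBasis 𝕜 E
  refine (T.isPositive_adjoint_comp_self.trace_nonneg).lt_of_ne' ?_
  rw [trace_eq_matrix_trace 𝕜 b.toBasis, toMatrix_comp _ b.toBasis, toMatrix_adjoint, Ne,
    Matrix.trace_conjTranspose_mul_self_eq_zero_iff]
  exact fun h => hT ((toMatrix b.toBasis b.toBasis).map_eq_zero_iff.mp h)

end LinearMap

theorem zero_section_kaehler_general
    (H : Type*) [NormedAddCommGroup H] [InnerProductSpace ℂ H] [FiniteDimensional ℂ H]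
    (q A B : H →ₗ[ℂ] H)
    (hqsa : LinearMap.adjoint q = q)
    (hAsa : LinearMap.adjoint A = A)
    (hBsa : LinearMap.adjoint B = B) :
    (Complex.I * LinearMap.trace ℂ H (q ∘ₗ (A ∘ₗ B - B ∘ₗ A)) =
      LinearMap.trace ℂ H (A ∘ₗ (Complex.I • (B ∘ₗ q - q ∘ₗ B)))) ∧
    (∃ r : ℝ, Complex.I * LinearMap.trace ℂ H (q ∘ₗ (A ∘ₗ B - B ∘ₗ A)) = (r : ℂ)) ∧
    (A ≠ 0 → ∃ r : ℝ, 0 < r ∧ LinearMap.trace ℂ H (A ∘ₗ A) = (r : ℂ)) := by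
  refine ⟨?_, ?_, fun hA0 => ?_⟩
  · rw [LinearMap.comp_smul, map_smul, smul_eq_mul, LinearMap.trace_comp_commutator_cycle]
  · refine Complex.conj_eq_iff_real.mp ?_
    rw [map_mul, Complex.conj_I, LinearMap.conj_trace_comp_commutator hqsa hAsa hBsa, neg_mul_neg]
  · have hpos := LinearMap.trace_adjoint_comp_self_pos hA0
    rw [hAsa] at hpos
    obtain ⟨r, hr, h⟩ := RCLike.pos_iff_exists_ofReal.mp hpos
    exact ⟨r, hr, h.symm⟩

/-- For an orthogonal projection `q` and self-adjoint tangent vectors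
`A, B` at `q`: (i) `Ω_q(A,B) = Tr(A ∘ i[B,q])`; (ii) `Ω_q(A,B)` is real;
(iii) `Tr(A∘A) > 0` whenever `A ≠ 0` (the form `(A,B) ↦ Tr(AB)` is positive
definite on self-adjoint tangent vectors).  Hence the zero section is Kähler for
the real part of `Ω` and Lagrangian for its imaginary part. -/
theorem zero_section_kaehler
    (H : Type*) [NormedAddCommGroup H] [InnerProductSpace ℂ H] [FiniteDimensional ℂ H]
    (q A B : H →ₗ[ℂ] H)
    (hq : q ∘ₗ q = q) (hqsa : LinearMap.adjoint q = q)
    (hA : q ∘ₗ A + A ∘ₗ q = A) (hAsa : LinearMap.adjoint A = A)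
    (hB : q ∘ₗ B + B ∘ₗ q = B) (hBsa : LinearMap.adjoint B = B) :
    (Complex.I * LinearMap.trace ℂ H (q ∘ₗ (A ∘ₗ B - B ∘ₗ A)) =
      LinearMap.trace ℂ H (A ∘ₗ (Complex.I • (B ∘ₗ q - q ∘ₗ B)))) ∧
    (∃ r : ℝ, Complex.I * LinearMap.trace ℂ H (q ∘ₗ (A ∘ₗ B - B ∘ₗ A)) = (r : ℂ)) ∧
    (A ≠ 0 → ∃ r : ℝ, 0 < r ∧ LinearMap.trace ℂ H (A ∘ₗ A) = (r : ℂ)) :=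
  zero_section_kaehler_general H q A B hqsa hAsa hBsa
end

section
/- Let H be a finite-dimensional complex inner product space, q : H → H a projection, and M : H → H any linear map. Then i[M,q] is a tangent vector at q (i.e. q(i[M,q]) + (i[M,q])q = i[M,q]), and for every tangent vector B at q one has Ω_q(i[M,q], B) = Tr(M∘B), where Ω_q(A,B) := i·Tr(q(AB − BA)). In other words, i[M,q] is the Hamiltonian vector of the expectation-value function ⟨M⟩(q) = Tr(qM) with respect to Ω. -/
/-!
A tangent vector `B` at an idempotent `q` is off-diagonal for the splitting defined by `q`:
multiplying `qB + Bq = B` by `q` on the right gives `qBq = 0`. Expanding `q[[M,q],B]` and using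
cyclicity of the trace, the terms containing `qBq` vanish and the rest collapse to
`-Tr(M(qB + Bq)) = -Tr(MB)`; the two factors of `i` turn this into `Tr(MB)`.
-/

/-- The linearization at `q` of the equation `q * q = q`. -/
def IsTangentAt {A : Type*} [Ring A] (q B : A) : Prop :=
  q * B + B * q = B

namespace IsIdempotentElem

variable {A : Type*} [Ring A] {q : A}

theorem isTangentAt_lie (hq : IsIdempotentElem q) (M : A) : IsTangentAt q ⁅M, q⁆ := by
  simp only [IsTangentAt, Ring.lie_def, mul_sub, sub_mul, ← mul_assoc, hq.eq]
  simp only [mul_assoc, hq.eq]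
  abel

theorem mul_mul_eq_zero_of_isTangentAt (hq : IsIdempotentElem q) {B : A}
    (hB : IsTangentAt q B) : q * B * q = 0 := by
  have h := congrArg (· * q) hB
  simp only [add_mul, mul_assoc, hq.eq] at h
  simpa [mul_assoc] using h

end IsIdempotentElem

theorem IsTangentAt.smul {R A : Type*} [Monoid R] [Ring A] [DistribMulAction R A]
    [IsScalarTower R A A] [SMulCommClass R A A]
    {q B : A} (hB : IsTangentAt q B) (c : R) : IsTangentAt q (c • B) := by
  rw [IsTangentAt, mul_smul_comm, smul_mul_assoc, ← smul_add, hB]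

namespace LinearMap

variable {R M : Type*} [CommRing R] [AddCommGroup M] [Module R M]

theorem trace_mul_lie_lie_of_isTangentAt {q : Module.End R M} (hq : IsIdempotentElem q)
    (X : Module.End R M) {B : Module.End R M} (hB : IsTangentAt q B) :
    trace R M (q * ⁅⁅X, q⁆, B⁆) = -trace R M (X * B) := by
  have hqBq := hq.mul_mul_eq_zero_of_isTangentAt hB
  have expand : q * ⁅⁅X, q⁆, B⁆ = q * X * q * B - q * X * B - q * B * X * q + q * B * q * X := by
    simp only [Ring.lie_def, mul_sub, sub_mul, ← mul_assoc, hq.eq]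
    abel
  have hqBqX : trace R M (q * B * q * X) = 0 := by rw [hqBq, zero_mul, map_zero]
  have hqXqB : trace R M (q * X * q * B) = 0 := by
    rw [mul_assoc (q * X), trace_mul_comm, ← mul_assoc, hqBqX]
  have hqBXq : trace R M (q * B * X * q) = trace R M (q * B * X) := by
    rw [trace_mul_comm, ← mul_assoc, ← mul_assoc, hq.eq]
  have hXB : trace R M (X * B) = trace R M (q * B * X) + trace R M (q * X * B) :=
    calc trace R M (X * B) = trace R M (X * (q * B)) + trace R M (X * B * q) := by
          rw [mul_assoc X B q, ← map_add, ← mul_add, hB]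
      _ = trace R M (q * B * X) + trace R M (q * X * B) := by
          rw [trace_mul_comm R X, trace_mul_comm R (X * B), ← mul_assoc]
  rw [expand, map_add, map_sub, map_sub, hqXqB, hqBqX, hqBXq, hXB]
  abel

end LinearMap

theorem hamiltonian_vector_of_expectation_general
    (H : Type*) [NormedAddCommGroup H] [InnerProductSpace ℂ H]
    (q M : H →ₗ[ℂ] H)
    (hq : q ∘ₗ q = q) :
    (q ∘ₗ (Complex.I • (M ∘ₗ q - q ∘ₗ M)) + (Complex.I • (M ∘ₗ q - q ∘ₗ M)) ∘ₗ q =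
      Complex.I • (M ∘ₗ q - q ∘ₗ M)) ∧
    (∀ B : H →ₗ[ℂ] H, q ∘ₗ B + B ∘ₗ q = B →
      Complex.I * LinearMap.trace ℂ H
          (q ∘ₗ ((Complex.I • (M ∘ₗ q - q ∘ₗ M)) ∘ₗ B - B ∘ₗ (Complex.I • (M ∘ₗ q - q ∘ₗ M)))) =
        LinearMap.trace ℂ H (M ∘ₗ B)) := by
  simp only [← Module.End.mul_eq_comp, ← Ring.lie_def] at hq ⊢
  have hq : IsIdempotentElem q := hq
  refine ⟨(hq.isTangentAt_lie M).smul Complex.I, fun B hB => ?_⟩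
  have hsmul : ⁅Complex.I • ⁅M, q⁆, B⁆ = Complex.I • ⁅⁅M, q⁆, B⁆ := by
    rw [Ring.lie_def (Complex.I • _), Ring.lie_def ⁅M, q⁆, smul_mul_assoc, mul_smul_comm, smul_sub]
  rw [hsmul, mul_smul_comm, map_smul, LinearMap.trace_mul_lie_lie_of_isTangentAt hq M hB,
    smul_eq_mul, ← mul_assoc, Complex.I_mul_I, neg_one_mul, neg_neg]

/-- For a projection `q` and any linear map `M`, the operator
`i[M,q]` is a tangent vector at `q`, and for every tangent vector `B` at `q`,
`Ω_q(i[M,q], B) = Tr(M∘B)`; i.e. `i[M,q]` is the Hamiltonian vector of the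
expectation value `⟨M⟩(q) = Tr(qM)`. -/
theorem hamiltonian_vector_of_expectation
    (H : Type*) [NormedAddCommGroup H] [InnerProductSpace ℂ H] [FiniteDimensional ℂ H]
    (q M : H →ₗ[ℂ] H)
    (hq : q ∘ₗ q = q) :
    (q ∘ₗ (Complex.I • (M ∘ₗ q - q ∘ₗ M)) + (Complex.I • (M ∘ₗ q - q ∘ₗ M)) ∘ₗ q =
      Complex.I • (M ∘ₗ q - q ∘ₗ M)) ∧
    (∀ B : H →ₗ[ℂ] H, q ∘ₗ B + B ∘ₗ q = B →
      Complex.I * LinearMap.trace ℂ H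
          (q ∘ₗ ((Complex.I • (M ∘ₗ q - q ∘ₗ M)) ∘ₗ B - B ∘ₗ (Complex.I • (M ∘ₗ q - q ∘ₗ M)))) =
        LinearMap.trace ℂ H (M ∘ₗ B)) :=
  hamiltonian_vector_of_expectation_general H q M hq
end

section
/- Let H be a finite-dimensional complex inner product space, q : H → H a projection, and M, N : H → H arbitrary linear maps. Then Tr(q·[[M,q],[N,q]]) = −Tr(q[M,N]); equivalently, Ω_q(i[M,q], i[N,q]) = i·Tr(q[M,N]), where Ω_q(A,B) := i·Tr(q(AB − BA)). (This is the statement that the expectation-value map M ↦ (q ↦ Tr(qM)) intertwines the commutator bracket on operators with the Poisson bracket of the symplectic form Ω on the space of projections.) -/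
/-!
Expanding with `q² = q` gives `q (Mq - qM)(Nq - qN) = qMqNq - qMNq`. Under a cyclic trace,
`τ(qXq) = τ(qX)` and `τ(qMqN) = τ(qNqM)`, so the terms `qMqNq` and `qNqMq` cancel in the
antisymmetrisation, leaving `-τ(q(MN - NM))`.
-/

namespace IsIdempotentElem

variable {A : Type*} [Ring A] {q : A}

theorem mul_commutator_mul_commutator (hq : IsIdempotentElem q) (M N : A) :
    q * ((M * q - q * M) * (N * q - q * N)) = q * (M * q * N) * q - q * (M * N) * q := by
  have hqq : q * q = q := hq
  calc q * ((M * q - q * M) * (N * q - q * N))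
      = q * (M * q * N) * q - q * M * (q * q) * N - (q * q) * M * N * q + (q * q) * M * q * N := by
        noncomm_ring
    _ = q * (M * q * N) * q - q * (M * N) * q := by rw [hqq]; noncomm_ring

variable {R : Type*} [AddCommGroup R] (τ : A →+ R)

theorem map_mul_mul_self (hq : IsIdempotentElem q) (hτ : ∀ a b, τ (a * b) = τ (b * a))
    (X : A) : τ (q * X * q) = τ (q * X) := by
  rw [hτ, ← mul_assoc, hq.eq]

theorem map_mul_commutator_commutator (hq : IsIdempotentElem q)
    (hτ : ∀ a b, τ (a * b) = τ (b * a)) (M N : A) :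
    τ (q * ((M * q - q * M) * (N * q - q * N) - (N * q - q * N) * (M * q - q * M))) =
      -τ (q * (M * N - N * M)) := by
  have hswap : τ (q * (M * q * N)) = τ (q * (N * q * M)) := by
    simpa only [mul_assoc] using hτ (q * M) (q * N)
  rw [mul_sub, hq.mul_commutator_mul_commutator, hq.mul_commutator_mul_commutator]
  simp only [map_sub, hq.map_mul_mul_self τ hτ, hswap, mul_sub]
  abel

end IsIdempotentElem

/-- For a projection `q` and arbitrary linear maps `M, N`:
`Tr(q·[[M,q],[N,q]]) = −Tr(q[M,N])`, equivalently
`Ω_q(i[M,q], i[N,q]) = i·Tr(q[M,N])`.  (The expectation-value map intertwines the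
commutator bracket with the Poisson bracket of `Ω`.) -/
theorem expectation_intertwines_brackets
    (H : Type*) [NormedAddCommGroup H] [InnerProductSpace ℂ H] [FiniteDimensional ℂ H]
    (q M N : H →ₗ[ℂ] H)
    (hq : q ∘ₗ q = q) :
    (LinearMap.trace ℂ H
        (q ∘ₗ ((M ∘ₗ q - q ∘ₗ M) ∘ₗ (N ∘ₗ q - q ∘ₗ N) -
          (N ∘ₗ q - q ∘ₗ N) ∘ₗ (M ∘ₗ q - q ∘ₗ M))) =
      -LinearMap.trace ℂ H (q ∘ₗ (M ∘ₗ N - N ∘ₗ M))) ∧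
    (Complex.I * LinearMap.trace ℂ H
        (q ∘ₗ ((Complex.I • (M ∘ₗ q - q ∘ₗ M)) ∘ₗ (Complex.I • (N ∘ₗ q - q ∘ₗ N)) -
          (Complex.I • (N ∘ₗ q - q ∘ₗ N)) ∘ₗ (Complex.I • (M ∘ₗ q - q ∘ₗ M)))) =
      Complex.I * LinearMap.trace ℂ H (q ∘ₗ (M ∘ₗ N - N ∘ₗ M))) := by
  have bracket : LinearMap.trace ℂ H
      (q ∘ₗ ((M ∘ₗ q - q ∘ₗ M) ∘ₗ (N ∘ₗ q - q ∘ₗ N) -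
        (N ∘ₗ q - q ∘ₗ N) ∘ₗ (M ∘ₗ q - q ∘ₗ M))) =
      -LinearMap.trace ℂ H (q ∘ₗ (M ∘ₗ N - N ∘ₗ M)) :=
    IsIdempotentElem.map_mul_commutator_commutator (LinearMap.trace ℂ H).toAddMonoidHom hq
      (LinearMap.trace_mul_comm ℂ) M N
  refine ⟨bracket, ?_⟩
  simp only [LinearMap.comp_smul, LinearMap.smul_comp, smul_smul, Complex.I_mul_I, neg_one_smul,
    ← neg_sub', LinearMap.comp_neg, map_neg, bracket, neg_neg]
end

section
/- Let d ≥ 1, let q₀ be a d×d complex matrix which is a self-adjoint projection of rank n ≥ 1, and let μ be the Haar probability measure on the unitary group U(d). Then for all vectors Ψ₁, Ψ₂ ∈ ℂ^d one has (d/n) · ∫_{U(d)} ⟨(U q₀ U*)Ψ₁, (U q₀ U*)Ψ₂⟩ dμ(U) = ⟨Ψ₁, Ψ₂⟩. (This says the map Ψ ↦ (q ↦ qΨ), from the Hilbert space ℂ^d to sections of the tautological bundle over the Grassmannian, preserves inner products, i.e. is a unitary equivalence onto its image.) -/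
/-! The average `M = ∫ U q₀ Uᴴ dμ` commutes with every unitary by left invariance of `μ`; since
unitaries span all matrices, `M` is scalar, and comparing traces gives `d • M = tr q₀ • 1 = n • 1`.
As each `U q₀ Uᴴ` is an orthogonal projection, `⟨U q₀ Uᴴ Ψ₁, U q₀ Uᴴ Ψ₂⟩ = ⟨Ψ₁, U q₀ Uᴴ Ψ₂⟩`,
whose integral is `⟨Ψ₁, M Ψ₂⟩ = (n / d) ⟨Ψ₁, Ψ₂⟩`. -/

open Matrix MeasureTheory

noncomputable instance matrixMeasurableSpace {l m α : Type*} [MeasurableSpace α] :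
    MeasurableSpace (Matrix l m α) :=
  inferInstanceAs (MeasurableSpace (l → m → α))

instance Matrix.borelSpace {m n α : Type*} [Countable m] [Countable n] [TopologicalSpace α]
    [MeasurableSpace α] [SecondCountableTopology α] [BorelSpace α] :
    BorelSpace (Matrix m n α) :=
  inferInstanceAs (BorelSpace (m → n → α))

theorem IsStarProjection.star_mulVec_dotProduct_mulVec {ι R : Type*} [Fintype ι]
    [CommSemiring R] [StarRing R] {P : Matrix ι ι R} (hP : IsStarProjection P) (x y : ι → R) :
    star (P *ᵥ x) ⬝ᵥ P *ᵥ y = star x ⬝ᵥ P *ᵥ y := by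
  rw [star_mulVec, dotProduct_mulVec, vecMul_vecMul, ← star_eq_conjTranspose,
    hP.isSelfAdjoint.star_eq, hP.isIdempotentElem.eq, ← dotProduct_mulVec]

namespace Matrix

variable {ι : Type*} [Fintype ι] [DecidableEq ι]

theorem trace_eq_rank_of_isIdempotentElem {K : Type*} [Field K] {P : Matrix ι ι K}
    (hP : IsIdempotentElem P) : P.trace = P.rank := by
  have hproj : LinearMap.IsProj (LinearMap.range P.mulVecLin) P.mulVecLin :=
    ⟨LinearMap.mem_range_self _, by rintro _ ⟨y, rfl⟩; simp [mulVec_mulVec, hP.eq]⟩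
  rw [← trace_toLin'_eq, toLin'_apply']
  exact hproj.trace

-- The C⋆-norm makes matrices a C⋆-algebra (spanned by its unitaries, with `‖U q Uᴴ‖ = ‖q‖`);
-- it induces the product topology, so matrix-valued Bochner integrals are the entrywise ones.
open scoped Matrix.Norms.L2Operator

theorem mem_range_scalar_of_forall_unitary_commute {M : Matrix ι ι ℂ}
    (hM : ∀ U ∈ unitaryGroup ι ℂ, Commute U M) : M ∈ Set.range (scalar ι) := by
  rw [← center_eq_range, Semigroup.mem_center_iff]
  intro A
  have hA : A ∈ Submodule.span ℂ (unitary (Matrix ι ι ℂ) : Set (Matrix ι ι ℂ)) := by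
    rw [CStarAlgebra.span_unitary]; trivial
  induction hA using Submodule.span_induction with
  | mem U hU => exact hM U hU
  | zero => simp
  | add A B _ _ hA hB => rw [add_mul, mul_add, hA, hB]
  | smul c A _ hA => rw [smul_mul_assoc, mul_smul_comm, hA]

theorem integral_dotProduct_mulVec {X : Type*} [MeasurableSpace X] {μ : Measure X}
    {f : X → Matrix ι ι ℂ} (hf : Integrable f μ) (v w : ι → ℂ) :
    ∫ x, v ⬝ᵥ f x *ᵥ w ∂μ = v ⬝ᵥ (∫ x, f x ∂μ) *ᵥ w := by
  let L : Matrix ι ι ℂ →ₗ[ℂ] ℂ :=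
    LinearMap.applyₗ w ∘ₗ LinearMap.applyₗ v ∘ₗ (toLinearMap₂' ℂ).toLinearMap
  simpa [L, toLinearMap₂'_apply'] using L.toContinuousLinearMap.integral_comp_comm hf

section UnitaryAverage

variable (μ : Measure (unitaryGroup ι ℂ)) (q : Matrix ι ι ℂ)

theorem integrable_unitary_conj [IsFiniteMeasure μ] :
    Integrable (fun U : unitaryGroup ι ℂ => (U : Matrix ι ι ℂ) * q * (U : Matrix ι ι ℂ)ᴴ) μ := by
  refine Integrable.of_bound (by fun_prop : Continuous _).aestronglyMeasurable ‖q‖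
    (Filter.Eventually.of_forall fun U => ?_)
  rw [← star_eq_conjTranspose, CStarRing.norm_mul_mem_unitary _ (Unitary.star_mem U.2),
    CStarRing.norm_mem_unitary_mul _ U.2]

theorem mul_integral_unitary_conj_mul_conjTranspose [IsFiniteMeasure μ] [μ.IsMulLeftInvariant]
    (V : unitaryGroup ι ℂ) :
    (V : Matrix ι ι ℂ) *
        (∫ U : unitaryGroup ι ℂ, (U : Matrix ι ι ℂ) * q * (U : Matrix ι ι ℂ)ᴴ ∂μ) *
        (V : Matrix ι ι ℂ)ᴴ =
      ∫ U : unitaryGroup ι ℂ, (U : Matrix ι ι ℂ) * q * (U : Matrix ι ι ℂ)ᴴ ∂μ := by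
  calc _ = ∫ U : unitaryGroup ι ℂ,
          (↑(V * U) : Matrix ι ι ℂ) * q * (↑(V * U) : Matrix ι ι ℂ)ᴴ ∂μ := by
        rw [← ContinuousLinearMap.mulLeftRight_apply ℂ,
          ← ContinuousLinearMap.integral_comp_comm _ (integrable_unitary_conj μ q)]
        simp [mul_assoc]
    _ = _ := integral_mul_left_eq_self
      (fun U : unitaryGroup ι ℂ => (U : Matrix ι ι ℂ) * q * (U : Matrix ι ι ℂ)ᴴ) V

theorem trace_integral_unitary_conj [IsProbabilityMeasure μ] :
    (∫ U : unitaryGroup ι ℂ, (U : Matrix ι ι ℂ) * q * (U : Matrix ι ι ℂ)ᴴ ∂μ).trace =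
      q.trace := by
  rw [← traceLinearMap_apply ι ℂ ℂ, ← LinearMap.coe_toContinuousLinearMap',
    ← ContinuousLinearMap.integral_comp_comm _ (integrable_unitary_conj μ q)]
  simp [trace_mul_cycle _ q, ← star_eq_conjTranspose, Unitary.star_mul_self_of_mem]

theorem card_smul_integral_unitary_conj [IsProbabilityMeasure μ] [μ.IsMulLeftInvariant] :
    (Fintype.card ι : ℂ) •
        ∫ U : unitaryGroup ι ℂ, (U : Matrix ι ι ℂ) * q * (U : Matrix ι ι ℂ)ᴴ ∂μ =
      q.trace • 1 := by
  set M := ∫ U : unitaryGroup ι ℂ, (U : Matrix ι ι ℂ) * q * (U : Matrix ι ι ℂ)ᴴ ∂μ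
  have hcomm : ∀ V ∈ unitaryGroup ι ℂ, Commute V M := fun V hV => by
    calc V * M = V * M * Vᴴ * V := by
          rw [mul_assoc _ Vᴴ, ← star_eq_conjTranspose, Unitary.star_mul_self_of_mem hV, mul_one]
      _ = M * V := by rw [mul_integral_unitary_conj_mul_conjTranspose μ q ⟨V, hV⟩]
  obtain ⟨c, hc⟩ := mem_range_scalar_of_forall_unitary_commute hcomm
  have htrace : M.trace = q.trace := trace_integral_unitary_conj μ q
  rw [← hc] at htrace ⊢
  ext i j
  simp [← htrace, scalar_apply, diagonal_apply, one_apply]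

end UnitaryAverage

end Matrix

theorem coherent_state_map_unitary_general
    (d n : ℕ) (hn : 1 ≤ n)
    (q₀ : Matrix (Fin d) (Fin d) ℂ)
    (hidem : q₀ * q₀ = q₀) (hsa : q₀ᴴ = q₀) (hrank : q₀.rank = n)
    (μ : Measure (Matrix.unitaryGroup (Fin d) ℂ))
    [IsProbabilityMeasure μ]
    (hinv : ∀ U₀ : Matrix.unitaryGroup (Fin d) ℂ,
      Measure.map (fun U => U₀ * U) μ = μ) :
    ∀ Ψ₁ Ψ₂ : Fin d → ℂ,
      ((d : ℂ) / (n : ℂ)) *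
        (∫ U : Matrix.unitaryGroup (Fin d) ℂ,
          star (((U : Matrix (Fin d) (Fin d) ℂ) * q₀ * (U : Matrix (Fin d) (Fin d) ℂ)ᴴ).mulVec Ψ₁) ⬝ᵥ
            (((U : Matrix (Fin d) (Fin d) ℂ) * q₀ * (U : Matrix (Fin d) (Fin d) ℂ)ᴴ).mulVec Ψ₂) ∂μ) =
      star Ψ₁ ⬝ᵥ Ψ₂ := by
  intro Ψ₁ Ψ₂
  have : μ.IsMulLeftInvariant := ⟨hinv⟩
  have hq₀ : IsStarProjection q₀ := ⟨hidem, hsa⟩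
  have havg := card_smul_integral_unitary_conj μ q₀
  rw [Fintype.card_fin, trace_eq_rank_of_isIdempotentElem hidem, hrank] at havg
  have hconj : ∀ U : unitaryGroup (Fin d) ℂ,
      IsStarProjection ((U : Matrix (Fin d) (Fin d) ℂ) * q₀ * (U : Matrix (Fin d) (Fin d) ℂ)ᴴ) :=
    fun U => hq₀.map (Unitary.conjStarAlgAut ℂ _ U)
  simp only [(hconj _).star_mulVec_dotProduct_mulVec,
    integral_dotProduct_mulVec (integrable_unitary_conj μ q₀)]
  have hn₀ : (n : ℂ) ≠ 0 := by exact_mod_cast Nat.one_le_iff_ne_zero.mp hn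
  rw [div_eq_inv_mul, mul_assoc, ← smul_eq_mul (d : ℂ), ← dotProduct_smul, ← smul_mulVec,
    havg, smul_mulVec, one_mulVec, dotProduct_smul, smul_eq_mul, inv_mul_cancel_left₀ hn₀]

/-- Let `q₀` be a `d×d` complex self-adjoint projection of rank
`n ≥ 1` and let `μ` be the Haar probability measure on `U(d)`.  Then for all
`Ψ₁, Ψ₂ ∈ ℂ^d`, `(d/n) ∫ ⟨(U q₀ U*)Ψ₁, (U q₀ U*)Ψ₂⟩ dμ(U) = ⟨Ψ₁, Ψ₂⟩`, where
`⟨x, y⟩ = ∑ conj (x i) * y i` is the standard Hermitian inner product.  (The map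
`Ψ ↦ (q ↦ qΨ)` is a unitary equivalence onto its image.) -/
theorem coherent_state_map_unitary
    (d n : ℕ) (hd : 1 ≤ d) (hn : 1 ≤ n)
    (q₀ : Matrix (Fin d) (Fin d) ℂ)
    (hidem : q₀ * q₀ = q₀) (hsa : q₀ᴴ = q₀) (hrank : q₀.rank = n)
    (μ : Measure (Matrix.unitaryGroup (Fin d) ℂ))
    [IsProbabilityMeasure μ]
    (hinv : ∀ U₀ : Matrix.unitaryGroup (Fin d) ℂ,
      Measure.map (fun U => U₀ * U) μ = μ) :
    ∀ Ψ₁ Ψ₂ : Fin d → ℂ,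
      ((d : ℂ) / (n : ℂ)) *
        (∫ U : Matrix.unitaryGroup (Fin d) ℂ,
          star (((U : Matrix (Fin d) (Fin d) ℂ) * q₀ * (U : Matrix (Fin d) (Fin d) ℂ)ᴴ).mulVec Ψ₁) ⬝ᵥ
            (((U : Matrix (Fin d) (Fin d) ℂ) * q₀ * (U : Matrix (Fin d) (Fin d) ℂ)ᴴ).mulVec Ψ₂) ∂μ) =
      star Ψ₁ ⬝ᵥ Ψ₂ :=
  coherent_state_map_unitary_general d n hn q₀ hidem hsa hrank μ hinv
end
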